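/- arXiv:1901.07648 — 2 statements merged into one kernel-verified Lean document; each statement's English description precedes it below -/
import Mathlib

section
/- Suppose F = (1/n) Σ_{i=1}^n f_i is average-L-smooth. Consider SARAH with learning rate η satisfying 0 < η ≤ 2/(L(√(1+4m)+1)). Then for any initial point w̃_0 and any lower bound F* of F, (1/((m+1)S)) Σ_{s=1}^{S} Σ_{t=0}^{m} E[‖∇F(w_t^{(s)})‖²] ≤ (2/(η(m+1)S)) (F(w̃_0) − F*). -/
/-!
Along one inner loop the descent lemma gives
`F(w_{t+1}) ≤ F(w_t) - η/2 ‖∇F(w_t)‖² - (η/2 - Lη²/2) ‖v_t‖² + η/2 ‖∇F(w_t) - v_t‖²`.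
The estimator error `‖∇F(w_t) - v_t‖²` vanishes at `t = 0`, and averaging over the freshly
sampled index (a bias–variance decomposition, where average smoothness enters) shows that its
expectation grows by at most `L²η² E‖v_t‖²` per step. Summed over the `m + 1` steps, the
accumulated error is absorbed by the `‖v_t‖²` terms as soon as `L²η²m + Lη ≤ 1`, which is what
the step size condition says. So each outer loop lowers `E F` by at least
`η/2 Σ_t E‖∇F(w_t)‖²`, and telescoping over the outer loops down to `F*` gives the bound.
Expectations are finite averages over index tuples; conditioning on the past amounts to
resampling one coordinate of the tuple.
-/

noncomputable section

abbrev Vec (d : ℕ) : Type := EuclideanSpace ℝ (Fin d)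

/-- One inner loop of SARAH: `(innerSeq d n f F η x0 ι t) = (w_t, v_t)`, where the step from
`t` to `t+1` uses the sampled index `ι t` (so `ι t` plays the role of `i_{t+1}`). -/
noncomputable def innerSeq (d n : ℕ) (f : Fin n → Vec d → ℝ) (F : Vec d → ℝ) (η : ℝ)
    (x0 : Vec d) (ι : ℕ → Fin n) : ℕ → Vec d × Vec d
  | 0 => (x0, gradient F x0)
  | t + 1 =>
    let p := innerSeq d n f F η x0 ι t
    let w := p.1 - η • p.2
    (w, gradient (f (ι t)) w - gradient (f (ι t)) p.1 + p.2)

/-- Outer iterates of SARAH: `outerSeq d n m f F η w0 ω s = w̃_s`, where the `s`-th outer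
loop uses the index sequence `ω s` and `w̃_s = w_{m+1}^{(s)}`. -/
noncomputable def outerSeq (d n m : ℕ) (f : Fin n → Vec d → ℝ) (F : Vec d → ℝ) (η : ℝ)
    (w0 : Vec d) (ω : ℕ → ℕ → Fin n) : ℕ → Vec d
  | 0 => w0
  | s + 1 => (innerSeq d n f F η (outerSeq d n m f F η w0 ω s) (ω s) (m + 1)).1

/-- Expectation over the uniformly random index sequences of SARAH with (at least) `S` outer
loops of `m` inner steps each: the average of `X` over all `ω : Fin S → Fin m → Fin n`,
extended by a dummy index outside this range. -/
noncomputable def sarahE (n m S : ℕ) (hn : 0 < n) (X : (ℕ → ℕ → Fin n) → ℝ) : ℝ :=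
  (∑ ω : Fin S → Fin m → Fin n,
      X fun s t => if h : s < S ∧ t < m then ω ⟨s, h.1⟩ ⟨t, h.2⟩ else ⟨0, hn⟩) /
    (Fintype.card (Fin S → Fin m → Fin n) : ℝ)

open Finset RealInnerProductSpace

theorem add_sum_range_le_of_forall_succ_add_le {α : Type*} [AddCommMonoid α]
    [PartialOrder α] [IsOrderedAddMonoid α] {Φ G : ℕ → α} {N : ℕ}
    (h : ∀ t < N, Φ (t + 1) + G t ≤ Φ t) :
    Φ N + ∑ t ∈ range N, G t ≤ Φ 0 := by
  induction N with
  | zero => simp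
  | succ N ih =>
    calc Φ (N + 1) + ∑ t ∈ range (N + 1), G t
        = Φ (N + 1) + G N + ∑ t ∈ range N, G t := by rw [sum_range_succ]; abel
      _ ≤ Φ N + ∑ t ∈ range N, G t := by gcongr; exact h N N.lt_succ_self
      _ ≤ Φ 0 := ih fun t ht => h t (ht.trans N.lt_succ_self)

theorem sum_range_sum_range_le_mul_sum {q : ℕ → ℝ} (hq : ∀ t, 0 ≤ q t) (m : ℕ) :
    ∑ t ∈ range (m + 1), ∑ j ∈ range t, q j ≤ m * ∑ t ∈ range (m + 1), q t := by
  rw [sum_range_succ', range_zero, sum_empty, add_zero]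
  calc ∑ t ∈ range m, ∑ j ∈ range (t + 1), q j
      ≤ ∑ _t ∈ range m, ∑ j ∈ range (m + 1), q j := by
        refine sum_le_sum fun t ht => sum_le_sum_of_subset_of_nonneg ?_ fun j _ _ => hq j
        exact range_subset_range.mpr (by have := mem_range.mp ht; omega)
    _ = m * ∑ t ∈ range (m + 1), q t := by rw [sum_const, card_range, nsmul_eq_mul]

theorem sum_sum_update_eq_card_smul {ι α M : Type*} [Fintype ι] [DecidableEq ι] [Fintype α]
    [AddCommMonoid M] (p : ι) (g : (ι → α) → M) :
    ∑ κ, ∑ j, g (Function.update κ p j) = Fintype.card α • ∑ κ, g κ := by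
  let e : (ι → α) × α ≃ (ι → α) × α :=
    { toFun := fun x => (Function.update x.1 p x.2, x.1 p)
      invFun := fun x => (Function.update x.1 p x.2, x.1 p)
      left_inv := fun x => by simp
      right_inv := fun x => by simp }
  rw [← Fintype.sum_prod_type']
  refine (e.sum_comp fun x => g x.1).trans ?_
  simp [Fintype.sum_prod_type, smul_sum]

/-- Tower property for the uniform distribution on `ι → α`: conditioning on all coordinates
but the `p`-th one. -/
theorem sum_le_sum_of_sum_update_le {ι α : Type*} [Fintype ι] [DecidableEq ι] [Fintype α]
    [Nonempty α] (p : ι) {g h : (ι → α) → ℝ}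
    (hle : ∀ κ, ∑ j, g (Function.update κ p j) ≤ Fintype.card α * h κ) :
    ∑ κ, g κ ≤ ∑ κ, h κ := by
  have hcard : (0 : ℝ) < Fintype.card α := by exact_mod_cast Fintype.card_pos
  refine le_of_mul_le_mul_left ?_ hcard
  rw [← nsmul_eq_mul, ← sum_sum_update_eq_card_smul p, mul_sum]
  exact sum_le_sum fun κ _ => hle κ

section InnerProductSpace

variable {E : Type*} [NormedAddCommGroup E] [InnerProductSpace ℝ E]

/-- König–Huygens identity for a finite family `δ` with barycentre `μ`. -/
theorem sum_norm_sub_sq_add_card_mul {ι : Type*} [Fintype ι] {δ : ι → E} {μ : E}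
    (hμ : ∑ j, δ j = Fintype.card ι • μ) (a : E) :
    ∑ j, ‖a - δ j‖ ^ 2 + Fintype.card ι * ‖μ‖ ^ 2
      = Fintype.card ι * ‖a - μ‖ ^ 2 + ∑ j, ‖δ j‖ ^ 2 := by
  have hcross : ∑ j, ⟪a, δ j⟫ = Fintype.card ι * ⟪a, μ⟫ := by
    rw [← inner_sum, hμ, ← Nat.cast_smul_eq_nsmul ℝ, real_inner_smul_right]
  simp only [norm_sub_sq_real, sum_add_distrib, sum_sub_distrib, sum_const, card_univ,
    nsmul_eq_mul, ← mul_sum, hcross]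
  ring

variable [CompleteSpace E]

theorem hasGradientAt_of_eq_sum_div {ι : Type*} [Fintype ι] {f : ι → E → ℝ}
    {F : E → ℝ} {c : ℝ} (hF : ∀ w, F w = (∑ i, f i w) / c)
    (hdiff : ∀ i, Differentiable ℝ (f i)) (x : E) :
    HasGradientAt F (c⁻¹ • ∑ i, gradient (f i) x) x := by
  have hsum : HasFDerivAt (fun w => ∑ i, f i w)
      (∑ i, InnerProductSpace.toDual ℝ E (gradient (f i) x)) x :=
    HasFDerivAt.fun_sum fun i _ => (hdiff i x).hasGradientAt.hasFDerivAt
  have hF' : F = fun w => c⁻¹ * ∑ i, f i w := funext fun w => by rw [hF, div_eq_inv_mul]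
  rw [hF', hasGradientAt_iff_hasFDerivAt, map_smul, map_sum]
  exact hsum.const_mul c⁻¹

/-- The descent lemma. -/
theorem le_add_inner_add_half_mul_sq_of_lipschitz_gradient {F : E → ℝ}
    (hFd : Differentiable ℝ F) {L : ℝ}
    (hlip : ∀ x y, ‖gradient F x - gradient F y‖ ≤ L * ‖x - y‖) (x v : E) :
    F (x + v) ≤ F x + ⟪gradient F x, v⟫ + L / 2 * ‖v‖ ^ 2 := by
  have hpath : ∀ t : ℝ,
      HasDerivAt (fun t : ℝ => F (x + t • v)) ⟪gradient F (x + t • v), v⟫ t := by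
    intro t
    have hline : HasDerivAt (fun t : ℝ => x + t • v) v t := by
      simpa using ((hasDerivAt_id t).smul_const v).const_add x
    simpa [Function.comp_def] using
      (hFd (x + t • v)).hasGradientAt.hasFDerivAt.comp_hasDerivAt t hline
  have hmodel : ∀ t : ℝ,
      HasDerivAt (fun t : ℝ => F x + t * ⟪gradient F x, v⟫ + t ^ 2 * (L / 2 * ‖v‖ ^ 2))
        (⟪gradient F x, v⟫ + t * (L * ‖v‖ ^ 2)) t := by
    intro t
    refine ((((hasDerivAt_id t).mul_const ⟪gradient F x, v⟫).const_add (F x)).add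
      ((hasDerivAt_pow 2 t).mul_const (L / 2 * ‖v‖ ^ 2))).congr_deriv ?_
    simp only [one_mul, Nat.cast_ofNat, pow_one, Nat.add_one_sub_one]
    ring
  -- `t ↦ F (x + t • v)` stays below the quadratic model on `[0, 1]` because its slope does
  have hle := image_le_of_deriv_right_le_deriv_boundary (a := 0) (b := 1)
    (fun t _ => (hpath t).continuousAt.continuousWithinAt)
    (fun t _ => (hpath t).hasDerivWithinAt) (by simp)
    (fun t _ => (hmodel t).continuousAt.continuousWithinAt)
    (fun t _ => (hmodel t).hasDerivWithinAt)
    (fun t ht => by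
      have hlip_t : ‖gradient F (x + t • v) - gradient F x‖ ≤ L * (t * ‖v‖) := by
        simpa [norm_smul, abs_of_nonneg ht.1] using hlip (x + t • v) x
      have := real_inner_le_norm (gradient F (x + t • v) - gradient F x) v
      rw [inner_sub_left] at this
      nlinarith [norm_nonneg v])
    (Set.right_mem_Icc.mpr zero_le_one)
  simpa using hle

theorem apply_sub_smul_le_of_lipschitz_gradient {F : E → ℝ}
    (hFd : Differentiable ℝ F) {L : ℝ}
    (hlip : ∀ x y, ‖gradient F x - gradient F y‖ ≤ L * ‖x - y‖) (η : ℝ) (w v : E) :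
    F (w - η • v) ≤ F w - η / 2 * ‖gradient F w‖ ^ 2 - (η / 2 - L * η ^ 2 / 2) * ‖v‖ ^ 2
      + η / 2 * ‖gradient F w - v‖ ^ 2 := by
  have h := le_add_inner_add_half_mul_sq_of_lipschitz_gradient hFd hlip w (-(η • v))
  rw [← sub_eq_add_neg, inner_neg_right, real_inner_smul_right, norm_neg, norm_smul,
    mul_pow, Real.norm_eq_abs, sq_abs] at h
  rw [norm_sub_sq_real]
  linarith

section FiniteSum

variable {n : ℕ} {f : Fin n → E → ℝ} {F : E → ℝ}

theorem sum_gradient_sub_eq (hn : 0 < n)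
    (hgrad : ∀ x, gradient F x = (n : ℝ)⁻¹ • ∑ i, gradient (f i) x) (x y : E) :
    ∑ i, (gradient (f i) x - gradient (f i) y)
      = Fintype.card (Fin n) • (gradient F x - gradient F y) := by
  rw [hgrad, hgrad, ← smul_sub, ← sum_sub_distrib, Fintype.card_fin, ← Nat.cast_smul_eq_nsmul ℝ,
    smul_smul, mul_inv_cancel₀ (by positivity), one_smul]

theorem norm_gradient_sub_le (hn : 0 < n)
    (hgrad : ∀ x, gradient F x = (n : ℝ)⁻¹ • ∑ i, gradient (f i) x) {L : ℝ} (hL : 0 ≤ L)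
    (havg : ∀ w w' : E,
      (∑ i, ‖gradient (f i) w - gradient (f i) w'‖ ^ 2) / n ≤ L ^ 2 * ‖w - w'‖ ^ 2)
    (x y : E) : ‖gradient F x - gradient F y‖ ≤ L * ‖x - y‖ := by
  have hn' : (0 : ℝ) < n := by exact_mod_cast hn
  -- Huygens at the barycentre is Jensen's inequality `n ‖μ‖² ≤ ∑ ‖δ_j‖²`
  have huyg := sum_norm_sub_sq_add_card_mul (sum_gradient_sub_eq hn hgrad x y)
    (gradient F x - gradient F y)
  have hvar := havg x y
  rw [Fintype.card_fin, sub_self, norm_zero] at huyg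
  rw [div_le_iff₀ hn'] at hvar
  have hsq : ‖gradient F x - gradient F y‖ ^ 2 ≤ (L * ‖x - y‖) ^ 2 := by
    have : 0 ≤ ∑ j, ‖gradient F x - gradient F y - (gradient (f j) x - gradient (f j) y)‖ ^ 2 :=
      sum_nonneg fun j _ => sq_nonneg _
    nlinarith
  exact (pow_le_pow_iff_left₀ (norm_nonneg _) (by positivity) two_ne_zero).mp hsq

theorem sum_norm_gradient_sub_estimator_le (hn : 0 < n)
    (hgrad : ∀ x, gradient F x = (n : ℝ)⁻¹ • ∑ i, gradient (f i) x) {L : ℝ}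
    (havg : ∀ w w' : E,
      (∑ i, ‖gradient (f i) w - gradient (f i) w'‖ ^ 2) / n ≤ L ^ 2 * ‖w - w'‖ ^ 2)
    (x y u : E) :
    ∑ j, ‖gradient F y - (gradient (f j) y - gradient (f j) x + u)‖ ^ 2
      ≤ n * (‖gradient F x - u‖ ^ 2 + L ^ 2 * ‖y - x‖ ^ 2) := by
  have hn' : (0 : ℝ) < n := by exact_mod_cast hn
  have huyg := sum_norm_sub_sq_add_card_mul (sum_gradient_sub_eq hn hgrad y x) (gradient F y - u)
  have hvar := havg y x
  rw [Fintype.card_fin, sub_sub_sub_cancel_left] at huyg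
  rw [div_le_iff₀ hn'] at hvar
  simp only [sub_add_eq_add_sub, sub_sub, add_comm u] at huyg ⊢
  nlinarith [sq_nonneg ‖gradient F y - gradient F x‖]

end FiniteSum

end InnerProductSpace

theorem pos_of_le_two_div_stepsize {L η : ℝ} {m : ℕ} (hη0 : 0 < η)
    (hη : η ≤ 2 / (L * (√(1 + 4 * (m : ℝ)) + 1))) : 0 < L := by
  have hden : 0 < L * (√(1 + 4 * (m : ℝ)) + 1) :=
    (div_pos_iff_of_pos_left two_pos).mp (hη0.trans_le hη)
  exact pos_of_mul_pos_left hden (by positivity)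

/-- `2 / (√(1 + 4m) + 1)` is the positive root of `m a² + a = 1`, here with `a = L η`. -/
theorem sq_mul_sq_mul_add_le_one_of_le_two_div {L η : ℝ} {m : ℕ} (hη0 : 0 < η)
    (hη : η ≤ 2 / (L * (√(1 + 4 * (m : ℝ)) + 1))) :
    L ^ 2 * η ^ 2 * m + L * η ≤ 1 := by
  have hL := pos_of_le_two_div_stepsize hη0 hη
  set σ := √(1 + 4 * (m : ℝ))
  have hσ1 : 1 ≤ σ := Real.one_le_sqrt.mpr (le_add_of_nonneg_right (by positivity))
  have hσsq : σ ^ 2 = 1 + 4 * (m : ℝ) := Real.sq_sqrt (by positivity)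
  have hLη : L * η * (σ + 1) ≤ 2 := by
    rw [le_div_iff₀ (by positivity)] at hη
    linarith
  have hprod : 0 ≤ (2 - L * η * (σ + 1)) * (2 + L * η * (σ - 1)) :=
    mul_nonneg (by linarith) (by nlinarith [mul_pos hL hη0])
  have hexpand : (2 - L * η * (σ + 1)) * (2 + L * η * (σ - 1))
      = 4 * (1 - (L ^ 2 * η ^ 2 * m + L * η)) := by
    linear_combination (-(L * η) ^ 2) * hσsq
  linarith

theorem add_sum_le_of_descent_of_error_le {Φ g q e : ℕ → ℝ} {L η : ℝ} {m : ℕ} (hη : 0 ≤ η)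
    (hLη : L ^ 2 * η ^ 2 * m + L * η ≤ 1) (hq : ∀ t, 0 ≤ q t)
    (hΦ : ∀ t, Φ (t + 1) ≤ Φ t - η / 2 * g t - (η / 2 - L * η ^ 2 / 2) * q t + η / 2 * e t)
    (he : ∀ t ≤ m, e t ≤ L ^ 2 * η ^ 2 * ∑ j ∈ range t, q j) :
    Φ (m + 1) + η / 2 * ∑ t ∈ range (m + 1), g t ≤ Φ 0 := by
  have htel := add_sum_range_le_of_forall_succ_add_le (Φ := Φ) (N := m + 1)
    (G := fun t => η / 2 * g t + (η / 2 - L * η ^ 2 / 2) * q t - η / 2 * e t)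
    fun t _ => by linarith [hΦ t]
  simp only [sum_sub_distrib, sum_add_distrib, ← mul_sum] at htel
  have herr : ∑ t ∈ range (m + 1), e t ≤ L ^ 2 * η ^ 2 * (m * ∑ t ∈ range (m + 1), q t) :=
    calc ∑ t ∈ range (m + 1), e t
        ≤ ∑ t ∈ range (m + 1), L ^ 2 * η ^ 2 * ∑ j ∈ range t, q j :=
          sum_le_sum fun t ht => he t (Nat.lt_succ_iff.mp (mem_range.mp ht))
      _ ≤ L ^ 2 * η ^ 2 * (m * ∑ t ∈ range (m + 1), q t) := by
          rw [← mul_sum]; gcongr; exact sum_range_sum_range_le_mul_sum hq m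
  have hcoef : η / 2 * (L ^ 2 * η ^ 2 * m) ≤ η / 2 - L * η ^ 2 / 2 := by nlinarith
  have hqsum : 0 ≤ ∑ t ∈ range (m + 1), q t := sum_nonneg fun t _ => hq t
  nlinarith [mul_le_mul_of_nonneg_left herr (by positivity : 0 ≤ η / 2),
    mul_le_mul_of_nonneg_right hcoef hqsum]

def padSeq {α : Type*} {m : ℕ} (a : α) (κ : Fin m → α) : ℕ → α :=
  fun t => if h : t < m then κ ⟨t, h⟩ else a

section PadSeq

variable {α : Type*} {m : ℕ} (a : α) (κ : Fin m → α) (p : Fin m) (j : α)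

theorem padSeq_update_self : padSeq a (Function.update κ p j) p = j := by
  simp [padSeq]

theorem padSeq_update_of_ne {t : ℕ} (ht : t ≠ p) :
    padSeq a (Function.update κ p j) t = padSeq a κ t := by
  unfold padSeq
  split_ifs with h
  · exact Function.update_of_ne (by rintro rfl; exact ht rfl) _ _
  · rfl

end PadSeq

section Sarah

variable {d n m S : ℕ} {f : Fin n → Vec d → ℝ} {F : Vec d → ℝ} {η L : ℝ}

theorem innerSeq_congr (x0 : Vec d) {ι ι' : ℕ → Fin n} {t : ℕ} (h : ∀ s < t, ι s = ι' s) :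
    innerSeq d n f F η x0 ι t = innerSeq d n f F η x0 ι' t := by
  induction t with
  | zero => rfl
  | succ t ih =>
    simp only [innerSeq, ih fun s hs => h s (hs.trans t.lt_succ_self), h t t.lt_succ_self]

theorem outerSeq_congr (w0 : Vec d) {ω ω' : ℕ → ℕ → Fin n} {s : ℕ} (h : ∀ r < s, ω r = ω' r) :
    outerSeq d n m f F η w0 ω s = outerSeq d n m f F η w0 ω' s := by
  induction s with
  | zero => rfl
  | succ s ih =>
    simp only [outerSeq, ih fun r hr => h r (hr.trans s.lt_succ_self), h s s.lt_succ_self]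

theorem innerSeq_padSeq_update_succ (x0 : Vec d) (a : Fin n) (κ : Fin m → Fin n) (p : Fin m)
    (j : Fin n) :
    innerSeq d n f F η x0 (padSeq a (Function.update κ p j)) (p + 1)
      = let q := innerSeq d n f F η x0 (padSeq a κ) p
        (q.1 - η • q.2, gradient (f j) (q.1 - η • q.2) - gradient (f j) q.1 + q.2) := by
  rw [innerSeq, innerSeq_congr x0 fun s hs => padSeq_update_of_ne a κ p j hs.ne,
    padSeq_update_self]

theorem sum_norm_gradient_sub_innerSeq_succ_le
    (hgrad : ∀ x, gradient F x = (n : ℝ)⁻¹ • ∑ i, gradient (f i) x)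
    (havg : ∀ w w' : Vec d,
      (∑ i, ‖gradient (f i) w - gradient (f i) w'‖ ^ 2) / n ≤ L ^ 2 * ‖w - w'‖ ^ 2)
    (x0 : Vec d) (a : Fin n) {r : ℕ} (hr : r < m) :
    ∑ κ : Fin m → Fin n, ‖gradient F (innerSeq d n f F η x0 (padSeq a κ) (r + 1)).1
        - (innerSeq d n f F η x0 (padSeq a κ) (r + 1)).2‖ ^ 2
      ≤ ∑ κ : Fin m → Fin n, (‖gradient F (innerSeq d n f F η x0 (padSeq a κ) r).1
          - (innerSeq d n f F η x0 (padSeq a κ) r).2‖ ^ 2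
        + L ^ 2 * η ^ 2 * ‖(innerSeq d n f F η x0 (padSeq a κ) r).2‖ ^ 2) := by
  have : Nonempty (Fin n) := ⟨a⟩
  -- resampling the `r`-th index leaves `(w_r, v_r)` unchanged
  refine sum_le_sum_of_sum_update_le ⟨r, hr⟩ fun κ => ?_
  set x := (innerSeq d n f F η x0 (padSeq a κ) r).1
  set u := (innerSeq d n f F η x0 (padSeq a κ) r).2
  have hstep := innerSeq_padSeq_update_succ (f := f) (F := F) (η := η) x0 a κ ⟨r, hr⟩
  simp only [hstep, Fintype.card_fin]
  calc ∑ j, ‖gradient F (x - η • u) - (gradient (f j) (x - η • u) - gradient (f j) x + u)‖ ^ 2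
      ≤ n * (‖gradient F x - u‖ ^ 2 + L ^ 2 * ‖(x - η • u) - x‖ ^ 2) :=
        sum_norm_gradient_sub_estimator_le a.pos hgrad havg x (x - η • u) u
    _ = n * (‖gradient F x - u‖ ^ 2 + L ^ 2 * η ^ 2 * ‖u‖ ^ 2) := by
        rw [sub_sub_cancel_left, norm_neg, norm_smul, mul_pow, Real.norm_eq_abs, sq_abs, mul_assoc]

theorem sum_norm_gradient_sub_innerSeq_le
    (hgrad : ∀ x, gradient F x = (n : ℝ)⁻¹ • ∑ i, gradient (f i) x)
    (havg : ∀ w w' : Vec d,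
      (∑ i, ‖gradient (f i) w - gradient (f i) w'‖ ^ 2) / n ≤ L ^ 2 * ‖w - w'‖ ^ 2)
    (x0 : Vec d) (a : Fin n) {t : ℕ} (ht : t ≤ m) :
    ∑ κ : Fin m → Fin n, ‖gradient F (innerSeq d n f F η x0 (padSeq a κ) t).1
        - (innerSeq d n f F η x0 (padSeq a κ) t).2‖ ^ 2
      ≤ L ^ 2 * η ^ 2 * ∑ j ∈ range t, ∑ κ : Fin m → Fin n,
          ‖(innerSeq d n f F η x0 (padSeq a κ) j).2‖ ^ 2 := by
  induction t with
  | zero => simp [innerSeq]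
  | succ t ih =>
    have hstep := sum_norm_gradient_sub_innerSeq_succ_le (η := η) hgrad havg x0 a ht
    rw [sum_add_distrib, ← mul_sum] at hstep
    rw [sum_range_succ, mul_add]
    linarith [ih (Nat.le_of_succ_le ht)]

theorem sum_innerSeq_lyapunov_le (hFd : Differentiable ℝ F)
    (hlip : ∀ x y, ‖gradient F x - gradient F y‖ ≤ L * ‖x - y‖)
    (hgrad : ∀ x, gradient F x = (n : ℝ)⁻¹ • ∑ i, gradient (f i) x)
    (havg : ∀ w w' : Vec d,
      (∑ i, ‖gradient (f i) w - gradient (f i) w'‖ ^ 2) / n ≤ L ^ 2 * ‖w - w'‖ ^ 2)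
    (hη : 0 ≤ η) (hLη : L ^ 2 * η ^ 2 * m + L * η ≤ 1) (x0 : Vec d) (a : Fin n) :
    ∑ κ : Fin m → Fin n, (F (innerSeq d n f F η x0 (padSeq a κ) (m + 1)).1
        + η / 2 * ∑ t ∈ range (m + 1), ‖gradient F (innerSeq d n f F η x0 (padSeq a κ) t).1‖ ^ 2)
      ≤ Fintype.card (Fin m → Fin n) * F x0 := by
  have hdescent : ∀ t, ∑ κ : Fin m → Fin n, F (innerSeq d n f F η x0 (padSeq a κ) (t + 1)).1
      ≤ ∑ κ : Fin m → Fin n, F (innerSeq d n f F η x0 (padSeq a κ) t).1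
        - η / 2 * ∑ κ : Fin m → Fin n, ‖gradient F (innerSeq d n f F η x0 (padSeq a κ) t).1‖ ^ 2
        - (η / 2 - L * η ^ 2 / 2) * ∑ κ : Fin m → Fin n,
            ‖(innerSeq d n f F η x0 (padSeq a κ) t).2‖ ^ 2
        + η / 2 * ∑ κ : Fin m → Fin n, ‖gradient F (innerSeq d n f F η x0 (padSeq a κ) t).1
            - (innerSeq d n f F η x0 (padSeq a κ) t).2‖ ^ 2 := by
    intro t
    simp only [mul_sum, ← sum_sub_distrib, ← sum_add_distrib]
    exact sum_le_sum fun κ _ => apply_sub_smul_le_of_lipschitz_gradient hFd hlip η _ _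
  have hlyap := add_sum_le_of_descent_of_error_le
    (Φ := fun t => ∑ κ : Fin m → Fin n, F (innerSeq d n f F η x0 (padSeq a κ) t).1)
    (g := fun t => ∑ κ : Fin m → Fin n, ‖gradient F (innerSeq d n f F η x0 (padSeq a κ) t).1‖ ^ 2)
    hη hLη (fun t => sum_nonneg fun κ _ => sq_nonneg _) hdescent
    fun t ht => sum_norm_gradient_sub_innerSeq_le hgrad havg x0 a ht
  simp only [innerSeq, sum_const, card_univ, nsmul_eq_mul] at hlyap
  rw [sum_add_distrib, ← mul_sum, sum_comm]
  exact hlyap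

theorem sum_outerSeq_lyapunov_le (hFd : Differentiable ℝ F)
    (hlip : ∀ x y, ‖gradient F x - gradient F y‖ ≤ L * ‖x - y‖)
    (hgrad : ∀ x, gradient F x = (n : ℝ)⁻¹ • ∑ i, gradient (f i) x)
    (havg : ∀ w w' : Vec d,
      (∑ i, ‖gradient (f i) w - gradient (f i) w'‖ ^ 2) / n ≤ L ^ 2 * ‖w - w'‖ ^ 2)
    (hη : 0 ≤ η) (hLη : L ^ 2 * η ^ 2 * m + L * η ≤ 1) (w0 : Vec d) (a : Fin n) {s : ℕ}
    (hs : s < S) :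
    ∑ ω : Fin S → Fin m → Fin n,
        (F (outerSeq d n m f F η w0 (padSeq (fun _ => a) (padSeq a ∘ ω)) (s + 1))
          + η / 2 * ∑ t ∈ range (m + 1), ‖gradient F (innerSeq d n f F η
              (outerSeq d n m f F η w0 (padSeq (fun _ => a) (padSeq a ∘ ω)) s)
              (padSeq (fun _ => a) (padSeq a ∘ ω) s) t).1‖ ^ 2)
      ≤ ∑ ω : Fin S → Fin m → Fin n,
          F (outerSeq d n m f F η w0 (padSeq (fun _ => a) (padSeq a ∘ ω)) s) := by
  have : Nonempty (Fin m → Fin n) := ⟨fun _ => a⟩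
  refine sum_le_sum_of_sum_update_le ⟨s, hs⟩ fun ω => ?_
  have hprev : ∀ κ : Fin m → Fin n, outerSeq d n m f F η w0
      (padSeq (fun _ => a) (Function.update (padSeq a ∘ ω) ⟨s, hs⟩ (padSeq a κ))) s
        = outerSeq d n m f F η w0 (padSeq (fun _ => a) (padSeq a ∘ ω)) s := fun κ =>
    outerSeq_congr w0 fun r hr => padSeq_update_of_ne _ _ _ _ hr.ne
  have hcur : ∀ κ : Fin m → Fin n,
      padSeq (fun _ => a) (Function.update (padSeq a ∘ ω) ⟨s, hs⟩ (padSeq a κ)) s = padSeq a κ :=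
    fun κ => padSeq_update_self _ _ ⟨s, hs⟩ _
  simp only [Function.comp_update, outerSeq, hprev, hcur]
  exact sum_innerSeq_lyapunov_le hFd hlip hgrad havg hη hLη _ a

end Sarah

section Expectation

variable {n m S : ℕ} (hn : 0 < n)

theorem sarahE_eq_sum (X : (ℕ → ℕ → Fin n) → ℝ) :
    sarahE n m S hn X = (∑ ω : Fin S → Fin m → Fin n,
        X (padSeq (fun _ => ⟨0, hn⟩) (padSeq ⟨0, hn⟩ ∘ ω)))
      / (Fintype.card (Fin S → Fin m → Fin n) : ℝ) := by
  unfold sarahE padSeq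
  congr 1
  refine sum_congr rfl fun ω _ => congrArg X ?_
  funext s t
  by_cases hs : s < S <;> by_cases ht : t < m <;> simp [hs, ht]

theorem sarahE_const (c : ℝ) : sarahE n m S hn (fun _ => c) = c := by
  have : Nonempty (Fin n) := ⟨⟨0, hn⟩⟩
  have hcard : (Fintype.card (Fin S → Fin m → Fin n) : ℝ) ≠ 0 := by
    exact_mod_cast Fintype.card_ne_zero
  rw [sarahE, sum_const, card_univ, nsmul_eq_mul, mul_div_cancel_left₀ c hcard]

theorem sarahE_mono {X Y : (ℕ → ℕ → Fin n) → ℝ} (h : ∀ ω, X ω ≤ Y ω) :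
    sarahE n m S hn X ≤ sarahE n m S hn Y :=
  div_le_div_of_nonneg_right (sum_le_sum fun _ _ => h _) (Nat.cast_nonneg _)

end Expectation

theorem sarahE_outerSeq_lyapunov_le {d n m S : ℕ} (hn : 0 < n) {f : Fin n → Vec d → ℝ}
    {F : Vec d → ℝ} {η L : ℝ} (hFd : Differentiable ℝ F)
    (hlip : ∀ x y, ‖gradient F x - gradient F y‖ ≤ L * ‖x - y‖)
    (hgrad : ∀ x, gradient F x = (n : ℝ)⁻¹ • ∑ i, gradient (f i) x)
    (havg : ∀ w w' : Vec d,
      (∑ i, ‖gradient (f i) w - gradient (f i) w'‖ ^ 2) / n ≤ L ^ 2 * ‖w - w'‖ ^ 2)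
    (hη : 0 ≤ η) (hLη : L ^ 2 * η ^ 2 * m + L * η ≤ 1) (w0 : Vec d) {s : ℕ} (hs : s < S) :
    sarahE n m S hn (fun ω => F (outerSeq d n m f F η w0 ω (s + 1)))
        + η / 2 * ∑ t ∈ range (m + 1), sarahE n m S hn (fun ω =>
            ‖gradient F (innerSeq d n f F η (outerSeq d n m f F η w0 ω s) (ω s) t).1‖ ^ 2)
      ≤ sarahE n m S hn (fun ω => F (outerSeq d n m f F η w0 ω s)) := by
  simp only [sarahE_eq_sum, ← sum_div, mul_div_assoc', ← add_div]
  refine div_le_div_of_nonneg_right ?_ (Nat.cast_nonneg _)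
  have h := sum_outerSeq_lyapunov_le hFd hlip hgrad havg hη hLη w0 ⟨0, hn⟩ hs
  rwa [sum_add_distrib, ← mul_sum, sum_comm] at h

theorem sarah_nonconvex_convergence_general
    (d n m S : ℕ) (hn : 0 < n)
    (f : Fin n → Vec d → ℝ) (F : Vec d → ℝ)
    (hF : ∀ w, F w = (∑ i, f i w) / n)
    (hdiff : ∀ i, Differentiable ℝ (f i))
    (L η : ℝ)
    (havg : ∀ w w' : Vec d,
      (∑ i, ‖gradient (f i) w - gradient (f i) w'‖ ^ 2) / n ≤ L ^ 2 * ‖w - w'‖ ^ 2)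
    (hη0 : 0 < η) (hη : η ≤ 2 / (L * (Real.sqrt (1 + 4 * (m : ℝ)) + 1)))
    (w0 : Vec d) (Fstar : ℝ) (hFstar : ∀ w, Fstar ≤ F w) :
    1 / (((m : ℝ) + 1) * (S : ℝ)) *
        ∑ s ∈ Finset.range S, ∑ t ∈ Finset.range (m + 1),
          sarahE n m S hn (fun ω =>
            ‖gradient F (innerSeq d n f F η (outerSeq d n m f F η w0 ω s) (ω s) t).1‖ ^ 2)
      ≤ 2 / (η * (((m : ℝ) + 1) * (S : ℝ))) * (F w0 - Fstar) := by
  have hgradF := hasGradientAt_of_eq_sum_div hF hdiff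
  have hgrad x := (hgradF x).gradient
  have hlip := norm_gradient_sub_le hn hgrad (pos_of_le_two_div_stepsize hη0 hη).le havg
  have htel := add_sum_range_le_of_forall_succ_add_le (N := S)
    (Φ := fun s => sarahE n m S hn (fun ω => F (outerSeq d n m f F η w0 ω s))) fun s hs =>
      sarahE_outerSeq_lyapunov_le hn (fun x => (hgradF x).differentiableAt) hlip hgrad havg
        hη0.le (sq_mul_sq_mul_add_le_one_of_le_two_div hη0 hη) w0 hs
  rw [← mul_sum] at htel
  have hstart : sarahE n m S hn (fun ω => F (outerSeq d n m f F η w0 ω 0)) = F w0 :=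
    sarahE_const (m := m) (S := S) hn (F w0)
  have hend : Fstar ≤ sarahE n m S hn (fun ω => F (outerSeq d n m f F η w0 ω S)) :=
    sarahE_const hn Fstar ▸ sarahE_mono hn fun ω => hFstar _
  calc 1 / (((m : ℝ) + 1) * (S : ℝ)) * ∑ s ∈ range S, ∑ t ∈ range (m + 1), _
      ≤ 1 / (((m : ℝ) + 1) * (S : ℝ)) * (2 / η * (F w0 - Fstar)) := by
        gcongr
        rw [div_mul_eq_mul_div, le_div_iff₀ hη0]
        linarith
    _ = 2 / (η * (((m : ℝ) + 1) * (S : ℝ))) * (F w0 - Fstar) := by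
        rw [← mul_assoc, div_mul_div_comm, one_mul, mul_comm (((m : ℝ) + 1) * (S : ℝ))]

/-- **Convergence of SARAH for smooth nonconvex optimization** (Statement 1, Theorem 1
of the paper). Under average-`L`-smoothness and `0 < η ≤ 2/(L(√(1+4m)+1))`, for any
initial point `w̃_0 = w0` and any lower bound `F*` of `F`,
`(1/((m+1)S)) Σ_{s=1}^S Σ_{t=0}^m E[‖∇F(w_t^{(s)})‖²] ≤ (2/(η(m+1)S))(F(w̃_0) - F*)`. -/
theorem sarah_nonconvex_convergence
    (d n m S : ℕ) (hn : 0 < n) (hS : 0 < S)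
    (f : Fin n → Vec d → ℝ) (F : Vec d → ℝ)
    (hF : ∀ w, F w = (∑ i, f i w) / n)
    (hdiff : ∀ i, Differentiable ℝ (f i))
    (L η : ℝ) (hL : 0 < L)
    (havg : ∀ w w' : Vec d,
      (∑ i, ‖gradient (f i) w - gradient (f i) w'‖ ^ 2) / n ≤ L ^ 2 * ‖w - w'‖ ^ 2)
    (hη0 : 0 < η) (hη : η ≤ 2 / (L * (Real.sqrt (1 + 4 * (m : ℝ)) + 1)))
    (w0 : Vec d) (Fstar : ℝ) (hFstar : ∀ w, Fstar ≤ F w) :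
    1 / (((m : ℝ) + 1) * (S : ℝ)) *
        ∑ s ∈ Finset.range S, ∑ t ∈ Finset.range (m + 1),
          sarahE n m S hn (fun ω =>
            ‖gradient F (innerSeq d n f F η (outerSeq d n m f F η w0 ω s) (ω s) t).1‖ ^ 2)
      ≤ 2 / (η * (((m : ℝ) + 1) * (S : ℝ))) * (F w0 - Fstar) :=
  sarah_nonconvex_convergence_general d n m S hn f F hF hdiff L η havg hη0 hη w0 Fstar hFstar
end
end

section
/- Suppose F = (1/n) Σ_{i=1}^n f_i is average-L-smooth. Consider a single outer-loop iteration of SARAH with learning rate η > 0. Then for every t with 1 ≤ t ≤ m and any outer iteration s ≥ 1, E[‖∇F(w_t^{(s)}) − v_t^{(s)}‖²] ≤ L²η² Σ_{j=1}^{t} E[‖v_{j−1}^{(s)}‖²]. -/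
noncomputable section

/-- Expectation over the first `k` uniformly random indices of a single SARAH inner loop:
the average of `X` over all `ι : Fin k → Fin n`, padded by a dummy index beyond `k`.
(All quantities appearing below depend only on the first `k` indices.) -/
noncomputable def loopE (n k : ℕ) (hn : 0 < n) (X : (ℕ → Fin n) → ℝ) : ℝ :=
  (∑ ι : Fin k → Fin n, X fun t => if h : t < k then ι ⟨t, h⟩ else ⟨0, hn⟩) /
    (Fintype.card (Fin k → Fin n) : ℝ)

/-!
Conditionally on the first `k` sampled indices, the increment `v_{k+1} - v_k` is an unbiased
estimate of `∇F(w_{k+1}) - ∇F(w_k)`. Hence the new error `∇F(w_{k+1}) - v_{k+1}` is the old error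
plus a centred term, the cross term vanishes on averaging over the `(k+1)`-st index, and the
centred term has variance at most its second moment, which average-`L`-smoothness bounds by
`L²‖w_{k+1} - w_k‖² = L²η²‖v_k‖²`. Summing these one-step bounds gives the theorem.
-/

open Finset

section Expectation

variable {n : ℕ} (hn : 0 < n)

def padIndex (k : ℕ) (ι : Fin k → Fin n) : ℕ → Fin n :=
  fun t => if h : t < k then ι ⟨t, h⟩ else ⟨0, hn⟩

theorem loopE_eq_sum_padIndex (k : ℕ) (X : (ℕ → Fin n) → ℝ) :
    loopE n k hn X = (∑ ι : Fin k → Fin n, X (padIndex hn k ι)) / (n : ℝ) ^ k := by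
  unfold loopE padIndex
  simp

theorem padIndex_snoc {k : ℕ} (σ : Fin k → Fin n) (i : Fin n) :
    padIndex hn (k + 1) (Fin.snoc σ i) = Function.update (padIndex hn k σ) k i := by
  funext j
  rcases lt_trichotomy j k with hj | rfl | hj
  · rw [Function.update_of_ne hj.ne]
    simp only [padIndex, dif_pos (Nat.lt_succ_of_lt hj), dif_pos hj]
    exact Fin.snoc_castSucc (i := ⟨j, hj⟩) ..
  · simp only [padIndex, dif_pos (Nat.lt_succ_self j), Function.update_self]
    exact Fin.snoc_last (α := fun _ => Fin n) ..
  · rw [Function.update_of_ne hj.ne']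
    simp only [padIndex, dif_neg (by omega : ¬j < k + 1), dif_neg hj.not_gt]

theorem loopE_succ (k : ℕ) (X : (ℕ → Fin n) → ℝ) :
    loopE n (k + 1) hn X =
      loopE n k hn (fun ι => (∑ i, X (Function.update ι k i)) / n) := by
  rw [loopE_eq_sum_padIndex, loopE_eq_sum_padIndex, ← sum_div, div_div, ← pow_succ',
    ← (Fin.snocEquiv fun _ => Fin n).sum_comp, Fintype.sum_prod_type, sum_comm]
  congr! 3 with σ _ i
  exact congrArg X (padIndex_snoc hn σ i)

theorem loopE_succ_of_update_eq {k : ℕ} {X : (ℕ → Fin n) → ℝ}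
    (hX : ∀ ι i, X (Function.update ι k i) = X ι) :
    loopE n (k + 1) hn X = loopE n k hn X := by
  rw [loopE_succ]
  congr 1
  funext ι
  simp [hX, hn.ne']

variable {k : ℕ}

theorem loopE_mono {X Y : (ℕ → Fin n) → ℝ} (h : ∀ ι, X ι ≤ Y ι) :
    loopE n k hn X ≤ loopE n k hn Y := by
  unfold loopE
  gcongr with ι
  exact h _

theorem loopE_add (X Y : (ℕ → Fin n) → ℝ) :
    loopE n k hn (fun ι => X ι + Y ι) = loopE n k hn X + loopE n k hn Y := by
  simp only [loopE, sum_add_distrib, add_div]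

theorem loopE_const_mul (c : ℝ) (X : (ℕ → Fin n) → ℝ) :
    loopE n k hn (fun ι => c * X ι) = c * loopE n k hn X := by
  simp only [loopE, ← mul_sum, mul_div_assoc]

end Expectation

section InnerProductSpace

variable {E : Type*} [NormedAddCommGroup E] [InnerProductSpace ℝ E]

/-- Shifting a family by `D` minus its mean: the cross term with `D` cancels, and the centred
family has variance at most its second moment. -/
theorem sum_norm_add_mean_sub_sq_le {ι : Type*} [Fintype ι] [Nonempty ι] (D : E) (a : ι → E) :
    ∑ i, ‖D + (Fintype.card ι : ℝ)⁻¹ • ∑ j, a j - a i‖ ^ 2 ≤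
      Fintype.card ι * ‖D‖ ^ 2 + ∑ i, ‖a i‖ ^ 2 := by
  set N : ℝ := (Fintype.card ι : ℝ)
  set μ : E := N⁻¹ • ∑ j, a j
  have hsum : ∑ j, a j = N • μ := by
    rw [smul_inv_smul₀ (by positivity)]
  have hexpand (i : ι) :
      ‖D + μ - a i‖ ^ 2 = ‖D + μ‖ ^ 2 - 2 * inner ℝ (D + μ) (a i) + ‖a i‖ ^ 2 :=
    norm_sub_sq_real _ _
  simp only [hexpand, sum_add_distrib, sum_sub_distrib, sum_const, ← mul_sum, ← inner_sum,
    hsum, real_inner_smul_right, inner_add_left, real_inner_self_eq_norm_sq, norm_add_sq_real,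
    card_univ, nsmul_eq_mul]
  nlinarith [sq_nonneg ‖μ‖]

theorem gradient_sum_div [CompleteSpace E] {ι : Type*} [Fintype ι] {f : ι → E → ℝ} {w : E}
    (hf : ∀ i, DifferentiableAt ℝ (f i) w) (c : ℝ) :
    gradient (fun x => (∑ i, f i x) / c) w = c⁻¹ • ∑ i, gradient (f i) w := by
  have hderiv : HasFDerivAt (fun x => (∑ i, f i x) / c) (c⁻¹ • ∑ i, fderiv ℝ (f i) w) w := by
    simpa only [div_eq_inv_mul] using
      (HasFDerivAt.fun_sum fun i _ => (hf i).hasFDerivAt).const_mul c⁻¹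
  rw [gradient, hderiv.fderiv, map_smul, map_sum]
  rfl

end InnerProductSpace

section Sarah

variable {d n : ℕ} (f : Fin n → Vec d → ℝ) (F : Vec d → ℝ) (η : ℝ) (x0 : Vec d)

def sqError (ι : ℕ → Fin n) (t : ℕ) : ℝ :=
  ‖gradient F (innerSeq d n f F η x0 ι t).1 - (innerSeq d n f F η x0 ι t).2‖ ^ 2

theorem innerSeq_update_of_le (ι : ℕ → Fin n) {k t : ℕ} (i : Fin n) (ht : t ≤ k) :
    innerSeq d n f F η x0 (Function.update ι k i) t = innerSeq d n f F η x0 ι t := by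
  induction t with
  | zero => rfl
  | succ t ih => simp only [innerSeq, ih (by omega), Function.update_of_ne (by omega : t ≠ k)]

variable {f F} (hn : 0 < n) (hF : ∀ w, F w = (∑ i, f i w) / n)
  (hdiff : ∀ i, Differentiable ℝ (f i)) {L : ℝ}
  (havg : ∀ w w' : Vec d,
    (∑ i, ‖gradient (f i) w - gradient (f i) w'‖ ^ 2) / n ≤ L ^ 2 * ‖w - w'‖ ^ 2)
include hn hF hdiff havg

theorem average_sqError_update_le (ι : ℕ → Fin n) (k : ℕ) :
    (∑ i, sqError f F η x0 (Function.update ι k i) (k + 1)) / n ≤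
      sqError f F η x0 ι k + L ^ 2 * η ^ 2 * ‖(innerSeq d n f F η x0 ι k).2‖ ^ 2 := by
  set w := (innerSeq d n f F η x0 ι k).1
  set v := (innerSeq d n f F η x0 ι k).2
  set w' := w - η • v
  set a : Fin n → Vec d := fun i => gradient (f i) w' - gradient (f i) w
  have hgradF (x : Vec d) : gradient F x = (n : ℝ)⁻¹ • ∑ i, gradient (f i) x := by
    rw [show F = fun x => (∑ i, f i x) / n from funext hF]
    exact gradient_sum_div (fun i => (hdiff i).differentiableAt) _
  have hmean : gradient F w' - gradient F w = (n : ℝ)⁻¹ • ∑ j, a j := by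
    rw [hgradF, hgradF, ← smul_sub, ← sum_sub_distrib]
  have herror (i : Fin n) : sqError f F η x0 (Function.update ι k i) (k + 1) =
      ‖(gradient F w - v) + (n : ℝ)⁻¹ • ∑ j, a j - a i‖ ^ 2 := by
    simp only [sqError, innerSeq, innerSeq_update_of_le, le_refl, Function.update_self]
    change ‖gradient F w' - (gradient (f i) w' - gradient (f i) w + v)‖ ^ 2 = _
    rw [← hmean]
    congr 2
    simp only [a]
    abel
  have hstep : ‖w' - w‖ ^ 2 = η ^ 2 * ‖v‖ ^ 2 := by
    rw [sub_sub_cancel_left, norm_neg, norm_smul, mul_pow, Real.norm_eq_abs, sq_abs]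
  have : Nonempty (Fin n) := ⟨⟨0, hn⟩⟩
  calc (∑ i, sqError f F η x0 (Function.update ι k i) (k + 1)) / n
      = (∑ i, ‖(gradient F w - v) + (n : ℝ)⁻¹ • ∑ j, a j - a i‖ ^ 2) / n := by
        simp only [herror]
    _ ≤ (n * ‖gradient F w - v‖ ^ 2 + ∑ i, ‖a i‖ ^ 2) / n := by
        gcongr
        simpa only [Fintype.card_fin] using sum_norm_add_mean_sub_sq_le (gradient F w - v) a
    _ = ‖gradient F w - v‖ ^ 2 + (∑ i, ‖a i‖ ^ 2) / n := by
        rw [add_div, mul_div_cancel_left₀ _ (by positivity)]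
    _ ≤ ‖gradient F w - v‖ ^ 2 + L ^ 2 * ‖w' - w‖ ^ 2 := by
        gcongr
        exact havg w' w
    _ = sqError f F η x0 ι k + L ^ 2 * η ^ 2 * ‖v‖ ^ 2 := by
        rw [hstep, sqError]
        ring

theorem loopE_sqError_le (k : ℕ) :
    loopE n k hn (sqError f F η x0 · k) ≤
      L ^ 2 * η ^ 2 * ∑ j ∈ range k,
        loopE n k hn (fun ι => ‖(innerSeq d n f F η x0 ι j).2‖ ^ 2) := by
  induction k with
  | zero => simp [loopE, sqError, innerSeq]
  | succ k ih =>
    have hv (j : ℕ) (hj : j ≤ k) :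
        loopE n (k + 1) hn (fun ι => ‖(innerSeq d n f F η x0 ι j).2‖ ^ 2) =
          loopE n k hn (fun ι => ‖(innerSeq d n f F η x0 ι j).2‖ ^ 2) :=
      loopE_succ_of_update_eq hn fun ι i => by rw [innerSeq_update_of_le f F η x0 ι i hj]
    calc loopE n (k + 1) hn (sqError f F η x0 · (k + 1))
        = loopE n k hn
            (fun ι => (∑ i, sqError f F η x0 (Function.update ι k i) (k + 1)) / n) :=
          loopE_succ hn k _
      _ ≤ loopE n k hn (fun ι =>
            sqError f F η x0 ι k + L ^ 2 * η ^ 2 * ‖(innerSeq d n f F η x0 ι k).2‖ ^ 2) :=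
          loopE_mono hn fun ι => average_sqError_update_le η x0 hn hF hdiff havg ι k
      _ = loopE n k hn (sqError f F η x0 · k) +
            L ^ 2 * η ^ 2 * loopE n k hn (fun ι => ‖(innerSeq d n f F η x0 ι k).2‖ ^ 2) := by
          rw [loopE_add, loopE_const_mul]
      _ ≤ L ^ 2 * η ^ 2 * ∑ j ∈ range (k + 1),
            loopE n (k + 1) hn (fun ι => ‖(innerSeq d n f F η x0 ι j).2‖ ^ 2) := by
          rw [sum_range_succ, sum_congr rfl fun j hj => hv j (mem_range.mp hj).le, hv k le_rfl]
          linarith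

end Sarah

theorem sarah_variance_bound_general
    (d n m : ℕ) (hn : 0 < n)
    (f : Fin n → Vec d → ℝ) (F : Vec d → ℝ)
    (hF : ∀ w, F w = (∑ i, f i w) / n)
    (hdiff : ∀ i, Differentiable ℝ (f i))
    (L η : ℝ)
    (havg : ∀ w w' : Vec d,
      (∑ i, ‖gradient (f i) w - gradient (f i) w'‖ ^ 2) / n ≤ L ^ 2 * ‖w - w'‖ ^ 2)
    (x0 : Vec d) :
    ∀ t : ℕ, 1 ≤ t → t ≤ m →
      loopE n t hn (fun ι =>
          ‖gradient F (innerSeq d n f F η x0 ι t).1 - (innerSeq d n f F η x0 ι t).2‖ ^ 2)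
        ≤ L ^ 2 * η ^ 2 * ∑ j ∈ Finset.range t,
            loopE n t hn (fun ι => ‖(innerSeq d n f F η x0 ι j).2‖ ^ 2) :=
  fun t _ _ => loopE_sqError_le η x0 hn hF hdiff havg t

/-- **Variance bound for the SARAH estimator** (Statement 17).
Under average-`L`-smoothness, within a single outer loop of SARAH (with arbitrary
starting point `x0` and inner loop size `m`), for every `1 ≤ t ≤ m`,
`E[‖∇F(w_t) - v_t‖²] ≤ L²η² Σ_{j=1}^t E[‖v_{j-1}‖²]`. -/
theorem sarah_variance_bound
    (d n m : ℕ) (hn : 0 < n)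
    (f : Fin n → Vec d → ℝ) (F : Vec d → ℝ)
    (hF : ∀ w, F w = (∑ i, f i w) / n)
    (hdiff : ∀ i, Differentiable ℝ (f i))
    (L η : ℝ) (hL : 0 < L) (hη0 : 0 < η)
    (havg : ∀ w w' : Vec d,
      (∑ i, ‖gradient (f i) w - gradient (f i) w'‖ ^ 2) / n ≤ L ^ 2 * ‖w - w'‖ ^ 2)
    (x0 : Vec d) :
    ∀ t : ℕ, 1 ≤ t → t ≤ m →
      loopE n t hn (fun ι =>
          ‖gradient F (innerSeq d n f F η x0 ι t).1 - (innerSeq d n f F η x0 ι t).2‖ ^ 2)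
        ≤ L ^ 2 * η ^ 2 * ∑ j ∈ Finset.range t,
            loopE n t hn (fun ι => ‖(innerSeq d n f F η x0 ι j).2‖ ^ 2) :=
  sarah_variance_bound_general d n m hn f F hF hdiff L η havg x0

end
end
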